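/- (Extended fundamental lemma, second part, sufficiency.) Under the assumptions of the first part, if (ū_{[0,L-1]}, x̄_{[0,L-1]}, ȳ_{[0,L-1]}) is an input-state-output trajectory of the system (A, B, C, D) with x̄_0 ∈ R + O + K[x_0^1, ..., x_0^τ], then there exists g such that the stacked vector (ū_{[0,L-1]}, ȳ_{[0,L-1]}) equals [H_L(u^1) ... H_L(u^τ); H_L(y^1) ... H_L(y^τ)] g, i.e., the trajectory is parameterizable by the measured data. -/

import Mathlib

/-!
By duality it suffices to show that every pair of functionals `(ψ, η)` on input windows and on
states modulo the unobservable subspace `O` that annihilates all data windows also annihilates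
`(ū, x̄₀)`. Summing the annihilation relations along a window of length `d + L` with the
coefficients of the minimal polynomial `P` of `A` (of degree `d ≤ δ`) eliminates the initial state
and leaves a functional of `δ + L` consecutive inputs that vanishes on the data, hence vanishes
identically by persistency of excitation. At unit impulses this says that the impulse response of
`(ψ, η)` obeys the recurrence of `P` and starts with `d` zeros, so `ψ = 0` and `η` vanishes on
`A ^ j B`; along the data it then vanishes on `A ^ j x₀ⁱ` as well, hence on `R + O + K`.
Finally, a combination matching the input and the initial state modulo `O` also matches the output.
-/

open Matrix Finset

open Polynomial in
theorem exists_pow_eq_sum_range_of_aeval_eq_zero {R S : Type*} [CommRing R] [Ring S]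
    [Algebra R S] {a : S} {q : R[X]} (hq : q.Monic) (ha : aeval a q = 0) (j : ℕ) :
    ∃ c : ℕ → R, a ^ j = ∑ s ∈ range q.natDegree, c s • a ^ s := by
  by_cases hq1 : q = 1
  · have : Subsingleton S := subsingleton_of_zero_eq_one (by simpa [hq1] using ha.symm)
    exact ⟨0, Subsingleton.elim _ _⟩
  refine ⟨(X ^ j %ₘ q).coeff, ?_⟩
  rw [← aeval_eq_sum_range' (natDegree_modByMonic_lt _ hq hq1), aeval_modByMonic_eq_self_of_root ha,
    map_pow, aeval_X]

open Polynomial in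
theorem Matrix.pow_mulVec_mem_of_aeval_eq_zero {R n : Type*} [CommRing R] [Fintype n]
    [DecidableEq n] {A : Matrix n n R} {q : R[X]} (hq : q.Monic) (hA : aeval A q = 0)
    (W : Submodule R (n → R)) {v : n → R} (h : ∀ s < q.natDegree, A ^ s *ᵥ v ∈ W) (j : ℕ) :
    A ^ j *ᵥ v ∈ W := by
  obtain ⟨c, hc⟩ := exists_pow_eq_sum_range_of_aeval_eq_zero hq hA j
  rw [hc, sum_mulVec]
  exact W.sum_mem fun s hs => by
    rw [smul_mulVec]
    exact W.smul_mem _ (h s (mem_range.1 hs))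

section Trajectory

variable {𝕜 n m p : Type*} [Field 𝕜] [Fintype n] [Fintype m]
  (A : Matrix n n 𝕜) (B : Matrix n m 𝕜) (C : Matrix p n 𝕜) (D : Matrix p m 𝕜)

def IsStateTrajectory (N : ℕ) (u : ℕ → m → 𝕜) (x : ℕ → n → 𝕜) : Prop :=
  ∀ t, t + 1 < N → x (t + 1) = A *ᵥ x t + B *ᵥ u t

def IsTrajectory (N : ℕ) (u : ℕ → m → 𝕜) (x : ℕ → n → 𝕜) (y : ℕ → p → 𝕜) : Prop :=
  IsStateTrajectory A B N u x ∧ ∀ t < N, y t = C *ᵥ x t + D *ᵥ u t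

variable {A B C D} {N : ℕ} {u : ℕ → m → 𝕜} {x : ℕ → n → 𝕜} {y : ℕ → p → 𝕜}

theorem IsStateTrajectory.shift (h : IsStateTrajectory A B N u x) {c N' : ℕ} (hc : c + N' ≤ N) :
    IsStateTrajectory A B N' (fun t => u (c + t)) (fun t => x (c + t)) :=
  fun t ht => h (c + t) (by omega)

theorem IsTrajectory.shift (h : IsTrajectory A B C D N u x y) {c N' : ℕ} (hc : c + N' ≤ N) :
    IsTrajectory A B C D N' (fun t => u (c + t)) (fun t => x (c + t)) (fun t => y (c + t)) :=
  ⟨h.1.shift hc, fun t ht => h.2 (c + t) (by omega)⟩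

theorem IsTrajectory.sum_smul {J : Type*} [Fintype J] {u : J → ℕ → m → 𝕜} {x : J → ℕ → n → 𝕜}
    {y : J → ℕ → p → 𝕜} (h : ∀ j, IsTrajectory A B C D N (u j) (x j) (y j)) (g : J → 𝕜) :
    IsTrajectory A B C D N (fun t => ∑ j, g j • u j t) (fun t => ∑ j, g j • x j t)
      (fun t => ∑ j, g j • y j t) := by
  refine ⟨fun t ht => ?_, fun t ht => ?_⟩
  · simp only [(h _).1 t ht, mulVec_sum, mulVec_smul, smul_add, sum_add_distrib]
  · simp only [(h _).2 t ht, mulVec_sum, mulVec_smul, smul_add, sum_add_distrib]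

variable [DecidableEq n] (A B)

def forcedState (t : ℕ) : (ℕ → m → 𝕜) →ₗ[𝕜] n → 𝕜 :=
  ∑ q ∈ range t, (A ^ (t - 1 - q) * B).mulVecLin ∘ₗ LinearMap.proj q

variable {A B}

theorem forcedState_apply (t : ℕ) (u : ℕ → m → 𝕜) :
    forcedState A B t u = ∑ q ∈ range t, (A ^ (t - 1 - q) * B) *ᵥ u q := by
  simp [forcedState]

theorem forcedState_succ (t : ℕ) (u : ℕ → m → 𝕜) :
    forcedState A B (t + 1) u = A *ᵥ forcedState A B t u + B *ᵥ u t := by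
  rw [forcedState_apply, forcedState_apply, sum_range_succ, mulVec_sum, Nat.add_sub_cancel,
    Nat.sub_self, pow_zero, Matrix.one_mul]
  congr 1
  refine sum_congr rfl fun q hq => ?_
  rw [mulVec_mulVec, ← Matrix.mul_assoc, ← pow_succ']
  congr 3
  have := mem_range.1 hq
  omega

theorem IsStateTrajectory.eq_pow_mulVec_add_forcedState (h : IsStateTrajectory A B N u x) {t : ℕ}
    (ht : t < N) : x t = A ^ t *ᵥ x 0 + forcedState A B t u := by
  induction t with
  | zero => simp [forcedState]
  | succ t ih =>
    rw [h t ht, ih (by omega), forcedState_succ, mulVec_add, mulVec_mulVec, ← pow_succ']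
    abel

theorem IsTrajectory.output_eq_of_unobservable {u' : ℕ → m → 𝕜} {x' : ℕ → n → 𝕜}
    {y' : ℕ → p → 𝕜} (h : IsTrajectory A B C D N u x y) (h' : IsTrajectory A B C D N u' x' y')
    (hu : ∀ t < N, u t = u' t)
    (hx : ∀ k < Fintype.card n, (C * A ^ k) *ᵥ (x 0 - x' 0) = 0) {t : ℕ} (ht : t < N) :
    y t = y' t := by
  have hstate : ∀ t < N, x t - x' t = A ^ t *ᵥ (x 0 - x' 0) := by
    intro t
    induction t with
    | zero => simp
    | succ t ih =>
      intro ht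
      rw [h.1 t ht, h'.1 t ht, hu t (by omega), pow_succ', ← mulVec_mulVec, ← ih (by omega),
        mulVec_sub]
      abel
  have hC : A ^ t *ᵥ (x 0 - x' 0) ∈ LinearMap.ker C.mulVecLin :=
    pow_mulVec_mem_of_aeval_eq_zero (charpoly_monic A) (aeval_self_charpoly A) _
      (fun s hs => by
        rw [charpoly_natDegree_eq_dim] at hs
        simpa [mulVec_mulVec] using hx s hs) t
  rw [h.2 t ht, h'.2 t ht, hu t ht, ← sub_eq_zero, add_sub_add_right_eq_sub, ← mulVec_sub,
    hstate t ht]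
  simpa using hC

end Trajectory

section PersistentExcitation

variable {𝕜 ι m : Type*} [Field 𝕜] [Fintype m]

def IsCollectivelyPersistentlyExciting (T : ι → ℕ) (u : ι → ℕ → m → 𝕜) (N : ℕ) : Prop :=
  ∀ ξ : Fin N → m → 𝕜, (∀ i c, c + N ≤ T i → ∑ k : Fin N, ξ k ⬝ᵥ u i (c + k) = 0) → ξ = 0

theorem IsCollectivelyPersistentlyExciting.apply_eq_zero {T : ι → ℕ} {u : ι → ℕ → m → 𝕜}
    {N : ℕ} (hpe : IsCollectivelyPersistentlyExciting T u N) (f : (ℕ → m → 𝕜) →ₗ[𝕜] 𝕜)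
    (hloc : ∀ w w', (∀ t < N, w t = w' t) → f w = f w')
    (hf : ∀ i c, c + N ≤ T i → f (fun t => u i (c + t)) = 0) (w : ℕ → m → 𝕜) : f w = 0 := by
  classical
  set ζ : Fin N → m → 𝕜 := fun k a => f (Pi.single (k : ℕ) (Pi.single a 1))
  have hsingle : ∀ (k : Fin N) (v : m → 𝕜), f (Pi.single k v) = ζ k ⬝ᵥ v := by
    intro k v
    conv_lhs => rw [pi_eq_sum_univ' v, ← LinearMap.single_apply 𝕜 (fun _ : ℕ => m → 𝕜), map_sum]
    simp [ζ, dotProduct, mul_comm]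
  have hrepr : ∀ w, f w = ∑ k : Fin N, ζ k ⬝ᵥ w k := by
    intro w
    rw [hloc w (∑ k : Fin N, Pi.single (k : ℕ) (w k)) fun t ht => ?_, map_sum]
    · simp only [hsingle]
    · rw [Finset.sum_apply, sum_eq_single ⟨t, ht⟩] <;> simp +contextual [Fin.ext_iff, eq_comm]
  have hζ : ζ = 0 := hpe ζ fun i c hc => (hrepr _).symm.trans (hf i c hc)
  simp [hrepr, hζ]

end PersistentExcitation

theorem eq_zero_of_monic_recurrence {R M : Type*} [Semiring R] [AddCommMonoid M] [Module R M]
    {p : ℕ → R} {d N : ℕ} (hpd : p d = 1) {H : ℕ → M} (hinit : ∀ i < d, H i = 0)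
    (hrec : ∀ i < N, ∑ s ∈ range (d + 1), p s • H (i + s) = 0) : ∀ i < N + d, H i = 0 := by
  intro i
  induction i using Nat.strong_induction_on with
  | _ i ih =>
    intro hi
    rcases lt_or_ge i d with hid | hid
    · exact hinit i hid
    have hlow : ∑ s ∈ range d, p s • H (i - d + s) = 0 :=
      sum_eq_zero fun s hs => by
        have := mem_range.1 hs
        rw [ih _ (by omega) (by omega), smul_zero]
    simpa [sum_range_succ, hlow, hpd, Nat.sub_add_cancel hid] using hrec (i - d) (by omega)

section Annihilator

variable {𝕜 n m : Type*} [Field 𝕜] [Fintype n] [DecidableEq n] [Fintype m]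
  (A : Matrix n n 𝕜) (B : Matrix n m 𝕜) {L : ℕ} (ψ : (Fin L → m → 𝕜) →ₗ[𝕜] 𝕜)
  (η : (n → 𝕜) →ₗ[𝕜] 𝕜)

/-- On a trajectory annihilated by `(ψ, η)`, the initial-state contributions add up to
`η (P(A) x₀) = 0` with `P` the minimal polynomial. -/
noncomputable def minpolyCombination : (ℕ → m → 𝕜) →ₗ[𝕜] 𝕜 :=
  ∑ s ∈ range ((minpoly 𝕜 A).natDegree + 1), (minpoly 𝕜 A).coeff s •
    (ψ ∘ₗ LinearMap.funLeft 𝕜 (m → 𝕜) (fun k : Fin L => s + k) + η ∘ₗ forcedState A B s)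

/-- Term `s` of `minpolyCombination` at the impulse `e` at time `r ≤ o` is the value at `o - r + s`:
the offset `o` keeps the lag `s - r` a natural number. -/
noncomputable def impulseResponse (o : ℕ) (e : m → 𝕜) (i : ℕ) : 𝕜 :=
  if i ≤ o then ψ (fun k => (Pi.single (o - i) e : ℕ → m → 𝕜) k)
  else η (A ^ (i - o - 1) *ᵥ B *ᵥ e)

variable {A B ψ η}

theorem minpolyCombination_apply (w : ℕ → m → 𝕜) :
    minpolyCombination A B ψ η w = ∑ s ∈ range ((minpoly 𝕜 A).natDegree + 1),
      (minpoly 𝕜 A).coeff s • (ψ (fun k => w (s + k)) + η (forcedState A B s w)) := by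
  rw [minpolyCombination, LinearMap.sum_apply]
  rfl

theorem minpolyCombination_congr {w w' : ℕ → m → 𝕜}
    (h : ∀ t < (minpoly 𝕜 A).natDegree + L, w t = w' t) :
    minpolyCombination A B ψ η w = minpolyCombination A B ψ η w' := by
  simp only [minpolyCombination_apply, forcedState_apply]
  refine sum_congr rfl fun s hs => ?_
  have hs := mem_range.1 hs
  have hwin : (fun k : Fin L => w (s + k)) = fun k : Fin L => w' (s + k) :=
    funext fun k => h _ (by omega)
  have hforced : ∑ q ∈ range s, (A ^ (s - 1 - q) * B) *ᵥ w q =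
      ∑ q ∈ range s, (A ^ (s - 1 - q) * B) *ᵥ w' q :=
    sum_congr rfl fun q hq => by rw [h q (by have := mem_range.1 hq; omega)]
  rw [hwin, hforced]

theorem IsStateTrajectory.minpolyCombination_eq_zero {N : ℕ} {u : ℕ → m → 𝕜} {x : ℕ → n → 𝕜}
    (h : IsStateTrajectory A B N u x) (hL : 0 < L) (hN : (minpoly 𝕜 A).natDegree + L ≤ N)
    (hann : ∀ s ≤ (minpoly 𝕜 A).natDegree, ψ (fun k => u (s + k)) + η (x s) = 0) :
    minpolyCombination A B ψ η u = 0 := by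
  have hterm : ∀ s ∈ range ((minpoly 𝕜 A).natDegree + 1),
      ψ (fun k => u (s + k)) + η (forcedState A B s u) = -η (A ^ s *ᵥ x 0) := by
    intro s hs
    have hs := mem_range.1 hs
    rw [← add_sub_cancel_left (A ^ s *ᵥ x 0) (forcedState A B s u),
      ← h.eq_pow_mulVec_add_forcedState (by omega), map_sub, ← add_sub_assoc, hann s (by omega),
      zero_sub]
  rw [minpolyCombination_apply, sum_congr rfl fun s hs => by rw [hterm s hs]]
  simp only [smul_neg, sum_neg_distrib, neg_eq_zero, ← map_smul, ← smul_mulVec, ← map_sum,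
    ← sum_mulVec]
  rw [← Polynomial.aeval_eq_sum_range, minpoly.aeval, zero_mulVec, map_zero]

theorem minpolyCombination_single {o r : ℕ} (hr : r ≤ o) (e : m → 𝕜) :
    minpolyCombination A B ψ η (Pi.single r e) = ∑ s ∈ range ((minpoly 𝕜 A).natDegree + 1),
      (minpoly 𝕜 A).coeff s • impulseResponse A B ψ η o e (o - r + s) := by
  rw [minpolyCombination_apply]
  refine sum_congr rfl fun s _ => ?_
  rw [impulseResponse, forcedState_apply]
  by_cases hs : s ≤ r
  · have hwin : (fun k : Fin L => (Pi.single r e : ℕ → m → 𝕜) (s + k)) =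
        fun k : Fin L => (Pi.single (o - (o - r + s)) e : ℕ → m → 𝕜) k := by
      funext k
      rw [show o - (o - r + s) = r - s by omega]
      simp only [Pi.single_apply]
      congr 1
      exact propext (by omega)
    have hforced : ∑ q ∈ range s, (A ^ (s - 1 - q) * B) *ᵥ (Pi.single r e : ℕ → m → 𝕜) q = 0 :=
      sum_eq_zero fun q hq => by
        rw [Pi.single_eq_of_ne (by have := mem_range.1 hq; omega), mulVec_zero]
    rw [if_pos (by omega), hwin, hforced, map_zero, add_zero]
  · have hwin : (fun k : Fin L => (Pi.single r e : ℕ → m → 𝕜) (s + k)) = 0 :=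
      funext fun k => by simp [show s + (k : ℕ) ≠ r by omega]
    have hforced : ∑ q ∈ range s, (A ^ (s - 1 - q) * B) *ᵥ (Pi.single r e : ℕ → m → 𝕜) q =
        A ^ (o - r + s - o - 1) *ᵥ B *ᵥ e := by
      rw [sum_eq_single_of_mem r (mem_range.2 (by omega)) fun q _ hq => by
        rw [Pi.single_eq_of_ne hq, mulVec_zero], Pi.single_eq_same, ← mulVec_mulVec]
      congr 2
      omega
    rw [if_neg (by omega), hwin, hforced, map_zero, zero_add]

theorem IsCollectivelyPersistentlyExciting.annihilator_eq_zero {ι : Type*} {T : ι → ℕ}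
    {u : ι → ℕ → m → 𝕜} {x : ι → ℕ → n → 𝕜} {N : ℕ}
    (hpe : IsCollectivelyPersistentlyExciting T u N)
    (hdyn : ∀ i, IsStateTrajectory A B (T i) (u i) (x i)) (hL : 0 < L)
    (hN : (minpoly 𝕜 A).natDegree + L ≤ N)
    (hann : ∀ i c, c + L ≤ T i → ψ (fun k => u i (c + k)) + η (x i c) = 0) :
    ψ = 0 ∧ ∀ j e, η (A ^ j *ᵥ B *ᵥ e) = 0 := by
  set d := (minpoly 𝕜 A).natDegree
  have hΦ : ∀ w, minpolyCombination A B ψ η w = 0 :=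
    hpe.apply_eq_zero _ (fun w w' h => minpolyCombination_congr fun t ht => h t (by omega))
      fun i c hc => ((hdyn i).shift hc).minpolyCombination_eq_zero hL (by omega) fun s hs => by
        simpa [add_assoc] using hann i (c + s) (by omega)
  -- `impulseResponse` obeys the recurrence given by the minimal polynomial, and its first
  -- `d` values vanish because they would read `ψ` beyond its window
  have hH : ∀ e, ∀ i < d + L + 1 + d, impulseResponse A B ψ η (d + L) e i = 0 := fun e =>
    eq_zero_of_monic_recurrence (minpoly.monic (Algebra.IsIntegral.isIntegral A)).coeff_natDegree
      (fun i hi => by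
        have hwin : (fun k : Fin L => (Pi.single (d + L - i) e : ℕ → m → 𝕜) k) = 0 :=
          funext fun k => by simp [show (k : ℕ) ≠ d + L - i by omega]
        rw [impulseResponse, if_pos (by omega), hwin, map_zero])
      fun i hi => by
        rw [← hΦ (Pi.single (d + L - i) e),
          minpolyCombination_single (by omega : d + L - i ≤ d + L), Nat.sub_sub_self (by omega)]
  refine ⟨?_, fun j e => ?_⟩
  · have hsingle : ∀ k v, ψ (Pi.single k v) = 0 := fun k v => by
      have := hH v (d + L - k) (by omega)
      rw [impulseResponse, if_pos (by omega), Nat.sub_sub_self (by omega)] at this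
      convert this using 2
      refine funext fun k' => ?_
      simp [Pi.single_apply, Fin.ext_iff]
    refine LinearMap.ext fun w => ?_
    rw [← univ_sum_single w, map_sum]
    simp [hsingle]
  · have := pow_mulVec_mem_of_aeval_eq_zero (minpoly.monic (Algebra.IsIntegral.isIntegral A))
      (minpoly.aeval 𝕜 A) (LinearMap.ker η) (v := B *ᵥ e) (fun s hs => by
        have := hH e (d + L + 1 + s) (by omega)
        rw [impulseResponse, if_neg (by omega)] at this
        simpa [show d + L + 1 + s - (d + L) - 1 = s by omega] using this) j
    simpa using this

theorem IsStateTrajectory.apply_pow_mulVec_eq_zero {N : ℕ} {u : ℕ → m → 𝕜} {x : ℕ → n → 𝕜}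
    (h : IsStateTrajectory A B N u x) (hN : (minpoly 𝕜 A).natDegree ≤ N)
    (hB : ∀ j e, η (A ^ j *ᵥ B *ᵥ e) = 0) (hx : ∀ c < (minpoly 𝕜 A).natDegree, η (x c) = 0)
    (j : ℕ) : η (A ^ j *ᵥ x 0) = 0 := by
  have hforced : ∀ s, η (forcedState A B s u) = 0 := fun s => by
    rw [forcedState_apply, map_sum]
    exact sum_eq_zero fun q _ => by rw [← mulVec_mulVec, hB]
  have := pow_mulVec_mem_of_aeval_eq_zero (minpoly.monic (Algebra.IsIntegral.isIntegral A))
    (minpoly.aeval 𝕜 A) (LinearMap.ker η) (v := x 0) (fun s hs => by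
      rw [LinearMap.mem_ker, ← hx s hs, h.eq_pow_mulVec_add_forcedState (t := s) (by omega),
        map_add, hforced, add_zero]) j
  simpa using this

end Annihilator

theorem exists_sum_smul_eq_and_sub_mem_of_forall_dual {𝕜 J V W : Type*} [Field 𝕜] [Fintype J]
    [AddCommGroup V] [Module 𝕜 V] [AddCommGroup W] [Module 𝕜 W] (v : J → V) (w : J → W)
    (O : Submodule 𝕜 W) (a : V) (b : W)
    (h : ∀ (ψ : Module.Dual 𝕜 V) (η : Module.Dual 𝕜 W), O ≤ LinearMap.ker η →
      (∀ j, ψ (v j) + η (w j) = 0) → ψ a + η b = 0) :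
    ∃ g : J → 𝕜, ∑ j, g j • v j = a ∧ b - ∑ j, g j • w j ∈ O := by
  set S := Submodule.span 𝕜 (Set.range fun j => (v j, w j)) ⊔ O.map (LinearMap.inr 𝕜 V W)
  have hmem : (a, b) ∈ S := by
    by_contra hab
    obtain ⟨φ, hφab, hφS⟩ := Submodule.exists_dual_map_eq_bot_of_notMem hab inferInstance
    have hker : ∀ z ∈ S, φ z = 0 := fun z hz => by
      simpa [hφS] using Submodule.mem_map_of_mem (f := φ) hz
    have hsplit : ∀ z : V × W, φ z = φ (z.1, 0) + φ (0, z.2) := fun z => by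
      rw [← map_add, Prod.mk_add_mk, add_zero, zero_add]
    refine hφab ((hsplit _).trans (h (φ ∘ₗ LinearMap.inl 𝕜 V W) (φ ∘ₗ LinearMap.inr 𝕜 V W)
      (fun o ho => hker _ (Submodule.mem_sup_right (Submodule.mem_map_of_mem ho)))
      fun j => ?_))
    rw [LinearMap.comp_apply, LinearMap.comp_apply, LinearMap.inl_apply, LinearMap.inr_apply,
      ← hsplit (v j, w j)]
    exact hker _ (Submodule.mem_sup_left (Submodule.subset_span ⟨j, rfl⟩))
  obtain ⟨s, hs, t, ht, hst⟩ := Submodule.mem_sup.1 hmem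
  obtain ⟨g, rfl⟩ := (Submodule.mem_span_range_iff_exists_fun 𝕜).1 hs
  obtain ⟨o, ho, rfl⟩ := Submodule.mem_map.1 ht
  refine ⟨g, by simpa [Prod.fst_sum] using congrArg Prod.fst hst, ?_⟩
  have hb := congrArg Prod.snd hst
  simp only [Prod.snd_add, Prod.snd_sum, Prod.smul_snd, LinearMap.inr_apply] at hb
  rwa [← hb, add_sub_cancel_left]

theorem extended_fundamental_lemma_sufficiency_general
    (n m p L δ τ : ℕ) (hL : 0 < L)
    (A : Matrix (Fin n) (Fin n) ℝ) (B : Matrix (Fin n) (Fin m) ℝ)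
    (C : Matrix (Fin p) (Fin n) ℝ) (D : Matrix (Fin p) (Fin m) ℝ)
    (T : Fin τ → ℕ)
    (u : Fin τ → ℕ → Fin m → ℝ) (x : Fin τ → ℕ → Fin n → ℝ)
    (y : Fin τ → ℕ → Fin p → ℝ)
    (hdyn : ∀ i t, t + 1 < T i →
      x i (t + 1) = A.mulVec (x i t) + B.mulVec (u i t))
    (hout : ∀ i t, t < T i → y i t = C.mulVec (x i t) + D.mulVec (u i t))
    (hδ : (minpoly ℝ A).natDegree ≤ δ)
    (hlen : ∀ i, δ + L ≤ T i)
    (hpe : ∀ ξ : Fin (δ + L) → Fin m → ℝ,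
      (∀ i : Fin τ, ∀ c : ℕ, c + (δ + L) ≤ T i →
        ∑ k : Fin (δ + L), ξ k ⬝ᵥ u i (c + k) = 0) → ξ = 0)
    (ubar : ℕ → Fin m → ℝ) (xbar : ℕ → Fin n → ℝ) (ybar : ℕ → Fin p → ℝ)
    (hbardyn : ∀ t, t + 1 < L →
      xbar (t + 1) = A.mulVec (xbar t) + B.mulVec (ubar t))
    (hbarout : ∀ t, t < L → ybar t = C.mulVec (xbar t) + D.mulVec (ubar t))
    (hx0 : xbar 0 ∈
      (Submodule.span ℝ {v : Fin n → ℝ | ∃ j < n, ∃ i : Fin m,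
          v = (A ^ j).mulVec (fun k => B k i)}) ⊔
      (⨅ k : Fin n, LinearMap.ker ((C * A ^ (k : ℕ)).mulVecLin)) ⊔
      (Submodule.span ℝ {v : Fin n → ℝ | ∃ j < n, ∃ i : Fin τ,
          v = (A ^ j).mulVec (x i 0)})) :
    ∃ g : (Σ i : Fin τ, Fin (T i - L + 1)) → ℝ,
      (∀ k : Fin L, ubar k =
        ∑ j : (Σ i : Fin τ, Fin (T i - L + 1)), g j • u j.1 (j.2 + k)) ∧
      (∀ k : Fin L, ybar k =
        ∑ j : (Σ i : Fin τ, Fin (T i - L + 1)), g j • y j.1 (j.2 + k)) := by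
  have hwin : ∀ j : Σ i : Fin τ, Fin (T i - L + 1), j.2 + L ≤ T j.1 := fun j => by
    have := j.2.isLt; have := hlen j.1; omega
  obtain ⟨g, hgu, hgx⟩ := exists_sum_smul_eq_and_sub_mem_of_forall_dual
    (fun (j : Σ i : Fin τ, Fin (T i - L + 1)) (k : Fin L) => u j.1 (j.2 + k)) (fun j => x j.1 j.2)
    (⨅ k : Fin n, LinearMap.ker ((C * A ^ (k : ℕ)).mulVecLin)) (fun k => ubar k) (xbar 0)
    fun ψ η hO hann => by
      have hann' : ∀ i c, c + L ≤ T i → ψ (fun k => u i (c + k)) + η (x i c) = 0 :=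
        fun i c hc => hann ⟨i, c, by omega⟩
      obtain ⟨rfl, hB⟩ :=
        IsCollectivelyPersistentlyExciting.annihilator_eq_zero hpe hdyn hL (by omega) hann'
      rw [LinearMap.zero_apply, zero_add]
      refine sup_le (sup_le (Submodule.span_le.2 ?_) hO) (Submodule.span_le.2 ?_) hx0
      · rintro _ ⟨j, -, i, rfl⟩
        have := hB j (Pi.single i 1)
        rwa [mulVec_single_one] at this
      · rintro _ ⟨j, -, i, rfl⟩
        exact IsStateTrajectory.apply_pow_mulVec_eq_zero (hdyn i) (by have := hlen i; omega) hB
          (fun c hc => by simpa using hann' i c (by have := hlen i; omega)) j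
  have htraj := IsTrajectory.sum_smul (fun j : Σ i : Fin τ, Fin (T i - L + 1) =>
    IsTrajectory.shift (C := C) (D := D) (y := y j.1) ⟨hdyn j.1, hout j.1⟩ (hwin j)) g
  refine ⟨g, fun k => by simpa using (congrFun hgu k).symm, fun k => ?_⟩
  refine IsTrajectory.output_eq_of_unobservable (C := C) (D := D) ⟨hbardyn, hbarout⟩ htraj
    (fun t ht => by simpa using (congrFun hgu ⟨t, ht⟩).symm) (fun s hs => ?_) k.isLt
  rw [Fintype.card_fin] at hs
  simpa using (Submodule.mem_iInf _).1 hgx ⟨s, hs⟩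

/-- extended fundamental lemma, sufficiency: under collective
persistency of excitation of order δ + L with δ ≥ deg(minpoly A), every
trajectory (ū, x̄, ȳ) with x̄₀ ∈ R + O + K[x₀¹,...,x₀^τ] is parameterizable by
the measured data. -/
theorem extended_fundamental_lemma_sufficiency
    (n m p L δ τ : ℕ) (hL : 0 < L) (hδpos : 0 < δ)
    (A : Matrix (Fin n) (Fin n) ℝ) (B : Matrix (Fin n) (Fin m) ℝ)
    (C : Matrix (Fin p) (Fin n) ℝ) (D : Matrix (Fin p) (Fin m) ℝ)
    (T : Fin τ → ℕ)
    (u : Fin τ → ℕ → Fin m → ℝ) (x : Fin τ → ℕ → Fin n → ℝ)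
    (y : Fin τ → ℕ → Fin p → ℝ)
    (hdyn : ∀ i t, t + 1 < T i →
      x i (t + 1) = A.mulVec (x i t) + B.mulVec (u i t))
    (hout : ∀ i t, t < T i → y i t = C.mulVec (x i t) + D.mulVec (u i t))
    (hδ : (minpoly ℝ A).natDegree ≤ δ)
    (hlen : ∀ i, δ + L ≤ T i)
    (hpe : ∀ ξ : Fin (δ + L) → Fin m → ℝ,
      (∀ i : Fin τ, ∀ c : ℕ, c + (δ + L) ≤ T i →
        ∑ k : Fin (δ + L), ξ k ⬝ᵥ u i (c + k) = 0) → ξ = 0)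
    (ubar : ℕ → Fin m → ℝ) (xbar : ℕ → Fin n → ℝ) (ybar : ℕ → Fin p → ℝ)
    (hbardyn : ∀ t, t + 1 < L →
      xbar (t + 1) = A.mulVec (xbar t) + B.mulVec (ubar t))
    (hbarout : ∀ t, t < L → ybar t = C.mulVec (xbar t) + D.mulVec (ubar t))
    (hx0 : xbar 0 ∈
      (Submodule.span ℝ {v : Fin n → ℝ | ∃ j < n, ∃ i : Fin m,
          v = (A ^ j).mulVec (fun k => B k i)}) ⊔
      (⨅ k : Fin n, LinearMap.ker ((C * A ^ (k : ℕ)).mulVecLin)) ⊔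
      (Submodule.span ℝ {v : Fin n → ℝ | ∃ j < n, ∃ i : Fin τ,
          v = (A ^ j).mulVec (x i 0)})) :
    ∃ g : (Σ i : Fin τ, Fin (T i - L + 1)) → ℝ,
      (∀ k : Fin L, ubar k =
        ∑ j : (Σ i : Fin τ, Fin (T i - L + 1)), g j • u j.1 (j.2 + k)) ∧
      (∀ k : Fin L, ybar k =
        ∑ j : (Σ i : Fin τ, Fin (T i - L + 1)), g j • y j.1 (j.2 + k)) :=
  extended_fundamental_lemma_sufficiency_general n m p L δ τ hL A B C D T u x y hdyn hout hδ hlen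
    hpe ubar xbar ybar hbardyn hbarout hx0
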